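/- arXiv:1104.5004 — 2 statements merged into one kernel-verified Lean document; each statement's English description precedes it below -/
import Mathlib

section
/- Let p be an odd prime and A a set of j distinct nonzero residues mod p. The binary code with parity-check matrix H given by stacking the layers L_a, a ∈ A, is a linear code of length p^2 and dimension p^2 - j(p-1) - 1. -/
/-- `I(x)`: the `p × p` circulant permutation matrix over `F₂` with a one in
row `y` and column `x + y`. -/
def cpm (p : ℕ) (x : ZMod p) : Matrix (ZMod p) (ZMod p) (ZMod 2) :=
  fun y z => if z = x + y then 1 else 0

/-- The layer `L_a`: the `p × p²` binary matrix horizontally concatenating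
`I(0), I(a), …, I((p-1)a)`. -/
def layer (p : ℕ) (a : ZMod p) : Matrix (ZMod p) (ZMod p × ZMod p) (ZMod 2) :=
  fun y c => cpm p (c.1 * a) y c.2

/-- Vertical stacking of the layers `L_a` for `a` ranging over a finite set `A`. -/
def stack (p : ℕ) (A : Finset (ZMod p)) :
    Matrix ({a // a ∈ A} × ZMod p) (ZMod p × ZMod p) (ZMod 2) :=
  fun r c => layer p r.1.1 r.2 c

/-!
Write `H` for the stacked matrix. A vector `w` in the left kernel of `H` assigns to each layer `a`
a function `w (a, ·)` on `ZMod p`, and its constraints say `∑ₐ w (a, z - x a) = 0` for all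
`x, z`. Summing the constraints along the line `z = y + x b` counts `w (b, y)` exactly `p` times
(an odd number) and every other layer `a ≠ b` once over all of `ZMod p`, because `x ↦ x (b - a)`
is a bijection. Hence `w (b, y)` does not depend on `y`, and the left kernel consists of the
functions constant on each layer whose layer values sum to zero: it has dimension `j - 1`. So
`rank H = j p - (j - 1) = j (p - 1) + 1`, and rank–nullity gives the dimension of the code.
-/

open Matrix Module

lemma Matrix.rank_add_finrank_ker_mulVecLin {K m n : Type*} [Field K] [Fintype n]
    (M : Matrix m n K) :
    M.rank + finrank K (LinearMap.ker M.mulVecLin) = Fintype.card n := by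
  rw [Matrix.rank, LinearMap.finrank_range_add_finrank_ker, Module.finrank_fintype_fun_eq_card]

lemma finrank_ker_sum_proj_add_one {K ι : Type*} [Field K] [Fintype ι] [Nonempty ι] :
    finrank K (LinearMap.ker (∑ i, LinearMap.proj i : (ι → K) →ₗ[K] K)) + 1 =
      Fintype.card ι := by
  classical
  rw [Module.Dual.finrank_ker_add_one_of_ne_zero, Module.finrank_fintype_fun_eq_card]
  intro h
  obtain ⟨i⟩ := ‹Nonempty ι›
  simpa using LinearMap.congr_fun h (Pi.single i 1)

lemma Fintype.sum_comp_add_mul {F M : Type*} [Field F] [Fintype F] [AddCommMonoid M]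
    (g : F → M) (y : F) {d : F} (hd : d ≠ 0) :
    ∑ x, g (y + x * d) = ∑ z, g z :=
  Fintype.sum_equiv ((Equiv.mulRight₀ d hd).trans (Equiv.addLeft y)) _ _ fun _ => rfl

variable (p : ℕ) (A : Finset (ZMod p))

lemma stack_transpose_mulVec_apply [NeZero p] (w : {a // a ∈ A} × ZMod p → ZMod 2)
    (x z : ZMod p) :
    ((stack p A)ᵀ *ᵥ w) (x, z) = ∑ a : {a // a ∈ A}, w (a, z - x * a) := by
  simp [mulVec, dotProduct, stack, layer, cpm, Fintype.sum_prod_type, ← sub_eq_iff_eq_add']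

lemma sum_stack_transpose_mulVec_along_line [Fact p.Prime] (hodd : p ≠ 2)
    (w : {a // a ∈ A} × ZMod p → ZMod 2) (b : {a // a ∈ A}) (y : ZMod p) :
    ∑ x, ((stack p A)ᵀ *ᵥ w) (x, y + x * b) =
      w (b, y) + ∑ a ∈ Finset.univ.erase b, ∑ z, w (a, z) := by
  have hp_odd : ((p : ℕ) : ZMod 2) = 1 :=
    ZMod.natCast_eq_one_iff_odd.mpr ((Fact.out : p.Prime).odd_of_ne_two hodd)
  simp_rw [stack_transpose_mulVec_apply]
  rw [Finset.sum_comm, ← Finset.add_sum_erase _ _ (Finset.mem_univ b)]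
  congr 1
  · simp [ZMod.card, hp_odd]
  · refine Finset.sum_congr rfl fun a ha => ?_
    have hd : (b : ZMod p) - a ≠ 0 :=
      sub_ne_zero.mpr fun h => (Finset.ne_of_mem_erase ha) (Subtype.ext h).symm
    simpa only [add_sub_assoc, ← mul_sub] using
      Fintype.sum_comp_add_mul (fun z => w (a, z)) y hd

lemma apply_eq_apply_zero_of_mem_ker_stack_transpose [Fact p.Prime] (hodd : p ≠ 2)
    {w : {a // a ∈ A} × ZMod p → ZMod 2} (hw : (stack p A)ᵀ *ᵥ w = 0)
    (b : {a // a ∈ A}) (y : ZMod p) : w (b, y) = w (b, 0) := by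
  have line (y : ZMod p) := sum_stack_transpose_mulVec_along_line p A hodd w b y
  simp only [hw, Pi.zero_apply, Finset.sum_const_zero] at line
  exact add_right_cancel ((line y).symm.trans (line 0))

lemma ker_stack_transpose_eq_map [Fact p.Prime] (hodd : p ≠ 2) :
    LinearMap.ker (stack p A)ᵀ.mulVecLin =
      (LinearMap.ker (∑ a, LinearMap.proj a :
        ({a // a ∈ A} → ZMod 2) →ₗ[ZMod 2] ZMod 2)).map
          (LinearMap.funLeft (ZMod 2) (ZMod 2) Prod.fst) := by
  ext w
  simp only [LinearMap.mem_ker, Submodule.mem_map, mulVecLin_apply, LinearMap.sum_apply,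
    LinearMap.proj_apply]
  constructor
  · intro hw
    refine ⟨fun a => w (a, 0), ?_, funext fun c => ?_⟩
    · simpa [stack_transpose_mulVec_apply] using congrFun hw (0, 0)
    · exact (apply_eq_apply_zero_of_mem_ker_stack_transpose p A hodd hw c.1 c.2).symm
  · rintro ⟨f, hf, rfl⟩
    funext ⟨x, z⟩
    simpa [stack_transpose_mulVec_apply] using hf

lemma finrank_ker_stack_transpose_add_one [Fact p.Prime] (hodd : p ≠ 2) (hA : A.Nonempty) :
    finrank (ZMod 2) (LinearMap.ker (stack p A)ᵀ.mulVecLin) + 1 = A.card := by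
  have : Nonempty {a // a ∈ A} := hA.to_subtype
  have hinj : Function.Injective (LinearMap.funLeft (ZMod 2) (ZMod 2)
      (Prod.fst : {a // a ∈ A} × ZMod p → {a // a ∈ A})) :=
    LinearMap.funLeft_injective_of_surjective _ _ _ Prod.fst_surjective
  rw [ker_stack_transpose_eq_map p A hodd,
    ← (Submodule.equivMapOfInjective _ hinj _).finrank_eq,
    finrank_ker_sum_proj_add_one, Fintype.card_coe]

lemma rank_stack [Fact p.Prime] (hodd : p ≠ 2) (hA : A.Nonempty) :
    (stack p A).rank = A.card * (p - 1) + 1 := by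
  have hker := finrank_ker_stack_transpose_add_one p A hodd hA
  have hnullity := (stack p A)ᵀ.rank_add_finrank_ker_mulVecLin
  rw [rank_transpose, Fintype.card_prod, Fintype.card_coe, ZMod.card] at hnullity
  have hj : A.card ≤ A.card * p := Nat.le_mul_of_pos_right _ (Fact.out : p.Prime).pos
  rw [Nat.mul_sub_one]
  omega

theorem stmt_8_general (p : ℕ) [Fact p.Prime] (hodd : p ≠ 2)
    (A : Finset (ZMod p)) (hA : A.Nonempty) :
    Module.finrank (ZMod 2) (LinearMap.ker (stack p A).mulVecLin) =
      p ^ 2 - A.card * (p - 1) - 1 := by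
  have hnullity := (stack p A).rank_add_finrank_ker_mulVecLin
  rw [rank_stack p A hodd hA, Fintype.card_prod, ZMod.card, ← sq] at hnullity
  omega

/-- The binary code with parity-check matrix the stacking of the layers `L_a`,
`a ∈ A` (a set of `j` distinct nonzero residues), is a linear code of length
`p²` and dimension `p² - j(p-1) - 1`. -/
theorem stmt_8 (p : ℕ) [Fact p.Prime] (hodd : p ≠ 2)
    (A : Finset (ZMod p)) (hA : A.Nonempty) (hA0 : (0 : ZMod p) ∉ A) :
    Module.finrank (ZMod 2) (LinearMap.ker (stack p A).mulVecLin) =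
      p ^ 2 - A.card * (p - 1) - 1 :=
  stmt_8_general p hodd A hA
end

section
/- For an odd prime p ≥ 5 and integer i with 0 ≤ i ≤ (p-5)/2, the CSS construction applied to H_1 stacking layers L_1, ..., L_{(p-1)/2 - i} and H_2 stacking layers L_{(p+1)/2}, ..., L_{p-1-i} yields parameters of an [[p^2, 2(i+1)(p-1); 1]] entanglement-assisted code: length p^2, c = rank(H_1 H_2^T) = 1 ebit, and number of logical qubits p^2 - rank(H_1) - rank(H_2) + 1 = 2(i+1)(p-1). -/
open Matrix

/-!
Over `F₂` with `p` odd, a vector `ε` in the left kernel of a stack of layers is constant on each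
layer: summing its kernel equations along a line `z + x b` counts `ε (b, z)` an odd number of
times and every other layer's total once. So the left kernel is `{c : A → F₂ | ∑ c = 0}`, of
dimension `|A| - 1`, and the stack has rank `|A| p - (|A| - 1) = |A| (p - 1) + 1`. Two distinct
layers `L_a`, `L_b` have exactly one common column per pair of rows, so `H₁ H₂ᵀ` is all-ones and
has rank one. The parameters then follow from `|A| = |B| = (p - 1) / 2 - i`.
-/

section NatCastImage

variable {R : Type*} [AddGroupWithOne R] [DecidableEq R] (p : ℕ) [CharP R p]

theorem card_image_natCast_Icc {a b : ℕ} (hb : b < p) :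
    ((Finset.Icc a b).image (Nat.cast : ℕ → R)).card = b + 1 - a := by
  rw [Finset.card_image_of_injOn, Nat.card_Icc]
  exact (CharP.natCast_injOn_Iio R p).mono fun x hx => by
    simp only [Finset.coe_Icc, Set.mem_Icc] at hx
    exact Set.mem_Iio.mpr (by omega)

theorem disjoint_image_natCast_Icc {a b c d : ℕ} (hbc : b < c) (hd : d < p) :
    Disjoint ((Finset.Icc a b).image (Nat.cast : ℕ → R))
      ((Finset.Icc c d).image (Nat.cast : ℕ → R)) := by
  simp only [Finset.disjoint_left, Finset.mem_image, Finset.mem_Icc]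
  rintro _ ⟨x, hx, rfl⟩ ⟨y, hy, hyx⟩
  have := CharP.natCast_injOn_Iio R p (Set.mem_Iio.mpr (by omega))
    (Set.mem_Iio.mpr (by omega)) hyx
  omega

end NatCastImage

theorem Matrix.rank_of_const_one {K m n : Type*} [Field K] [Fintype m] [Fintype n]
    [Nonempty m] [Nonempty n] : (of fun (_ : m) (_ : n) => (1 : K)).rank = 1 := by
  classical
  have hle := rank_vecMulVec_le (fun _ : m => (1 : K)) (fun _ : n => (1 : K))
  refine le_antisymm (by simpa [vecMulVec] using hle) (Submodule.one_le_finrank_iff.mpr ?_)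
  obtain ⟨i⟩ := ‹Nonempty m›
  obtain ⟨j⟩ := ‹Nonempty n›
  refine (Submodule.ne_bot_iff _).mpr ⟨_, LinearMap.mem_range_self _ (Pi.single j 1), ?_⟩
  intro h
  simpa [mulVec, dotProduct] using congr_fun h i

namespace Stack

variable {p : ℕ}

theorem transpose_mulVec_apply [NeZero p] (A : Finset (ZMod p))
    (ε : {a // a ∈ A} × ZMod p → ZMod 2) (x z : ZMod p) :
    ((stack p A)ᵀ *ᵥ ε) (x, z) = ∑ a : {a // a ∈ A}, ε (a, z - x * a) := by
  simp only [mulVec, dotProduct, transpose_apply, stack, layer, cpm, Fintype.sum_prod_type,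
    ite_mul, one_mul, zero_mul]
  refine Finset.sum_congr rfl fun a _ => ?_
  rw [Finset.sum_eq_single_of_mem (z - x * a) (Finset.mem_univ _) fun y _ hy => if_neg ?_]
  · rw [if_pos (by ring)]
  · rintro rfl
    exact hy (by ring)

variable [Fact p.Prime]

theorem eq_sum_erase_of_transpose_mulVec_eq_zero (hp : Odd p) {A : Finset (ZMod p)}
    {ε : {a // a ∈ A} × ZMod p → ZMod 2} (hε : (stack p A)ᵀ *ᵥ ε = 0)
    (b : {a // a ∈ A}) (z : ZMod p) :
    ε (b, z) = ∑ a ∈ Finset.univ.erase b, ∑ y, ε (a, y) := by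
  have hsum : ∑ a : {a // a ∈ A}, ∑ x : ZMod p, ε (a, z + x * (b - a)) = 0 := by
    rw [Finset.sum_comm]
    refine Finset.sum_eq_zero fun x _ => ?_
    have hx := congr_fun hε (x, z + x * b)
    rw [transpose_mulVec_apply, Pi.zero_apply] at hx
    simpa only [mul_sub, ← add_sub_assoc] using hx
  have hself : ∑ x : ZMod p, ε (b, z + x * (b - b)) = ε (b, z) := by
    simp [hp.natCast_zmod_two]
  have hother : ∀ a ∈ Finset.univ.erase b,
      ∑ x : ZMod p, ε (a, z + x * (b - a)) = ∑ y, ε (a, y) := by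
    intro a ha
    have hba : (b : ZMod p) - a ≠ 0 :=
      sub_ne_zero.mpr fun h => (Finset.ne_of_mem_erase ha) (Subtype.ext h.symm)
    exact Equiv.sum_comp ((Equiv.mulRight₀ _ hba).trans (Equiv.addLeft z)) (fun y => ε (a, y))
  rw [← Finset.add_sum_erase _ _ (Finset.mem_univ b), hself, Finset.sum_congr rfl hother] at hsum
  exact CharTwo.add_eq_zero.mp hsum

theorem ker_transpose_mulVecLin (hp : Odd p) (A : Finset (ZMod p)) :
    LinearMap.ker (stack p A)ᵀ.mulVecLin =
      (LinearMap.ker (∑ a : {a // a ∈ A}, LinearMap.proj a :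
        ({a // a ∈ A} → ZMod 2) →ₗ[ZMod 2] ZMod 2)).map
        (LinearMap.funLeft (ZMod 2) (ZMod 2) Prod.fst) := by
  ext ε
  simp only [LinearMap.mem_ker, mulVecLin_apply, Submodule.mem_map, LinearMap.sum_apply,
    LinearMap.proj_apply]
  constructor
  · intro hε
    refine ⟨fun a => ε (a, 0), by simpa [transpose_mulVec_apply] using congr_fun hε (0, 0), ?_⟩
    funext ⟨a, y⟩
    rw [LinearMap.funLeft_apply, eq_sum_erase_of_transpose_mulVec_eq_zero hp hε a y,
      eq_sum_erase_of_transpose_mulVec_eq_zero hp hε a 0]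
  · rintro ⟨c, hc, rfl⟩
    funext ⟨x, z⟩
    simpa [transpose_mulVec_apply] using hc

theorem rank_eq (hp : Odd p) {A : Finset (ZMod p)} (hA : A.Nonempty) :
    (stack p A).rank = A.card * (p - 1) + 1 := by
  set σ : ({a // a ∈ A} → ZMod 2) →ₗ[ZMod 2] ZMod 2 := ∑ a : {a // a ∈ A}, LinearMap.proj a
  have hσ : σ ≠ 0 := by
    obtain ⟨a⟩ := hA.coe_sort
    intro h
    simpa [σ] using LinearMap.congr_fun h (Pi.single a 1)
  have hkerσ := Module.Dual.finrank_ker_add_one_of_ne_zero hσ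
  have hker : Module.finrank (ZMod 2) (LinearMap.ker (stack p A)ᵀ.mulVecLin) =
      Module.finrank (ZMod 2) (LinearMap.ker σ) := by
    rw [ker_transpose_mulVecLin hp A]
    exact (Submodule.equivMapOfInjective _
      (LinearMap.funLeft_injective_of_surjective _ _ _ Prod.fst_surjective) _).finrank_eq.symm
  have hrn := LinearMap.finrank_range_add_finrank_ker (stack p A)ᵀ.mulVecLin
  rw [← rank, rank_transpose, hker] at hrn
  simp only [Module.finrank_fintype_fun_eq_card, Fintype.card_prod, Fintype.card_coe,
    ZMod.card] at hrn hkerσ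
  rw [Nat.mul_sub_one]
  have : A.card ≤ A.card * p := Nat.le_mul_of_pos_right _ (NeZero.pos p)
  omega

/-- Rows `(a, y)` and `(b, z)` share exactly one column, in block `x = (z - y) / (a - b)`. -/
theorem mul_transpose_of_disjoint {A B : Finset (ZMod p)} (hAB : Disjoint A B) :
    stack p A * (stack p B)ᵀ = of fun _ _ => 1 := by
  ext ⟨⟨a, ha⟩, y⟩ ⟨⟨b, hb⟩, z⟩
  have hab : a - b ≠ 0 := sub_ne_zero.mpr <| by
    rintro rfl
    exact Finset.disjoint_left.mp hAB ha hb
  have hmeet : ∀ x : ZMod p, x * a + y = x * b + z ↔ x = (z - y) / (a - b) := fun x => by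
    rw [eq_div_iff hab]
    constructor <;> intro h <;> linear_combination h
  simp only [mul_apply, transpose_apply, stack, layer, cpm, of_apply, Fintype.sum_prod_type,
    ite_mul, one_mul, zero_mul, Finset.sum_ite_eq', Finset.mem_univ, if_true, hmeet]

end Stack

theorem stmt_15_general (p : ℕ) [Fact p.Prime] (hp5 : 5 ≤ p)
    (i : ℕ) (hi : i ≤ (p - 5) / 2)
    (A B : Finset (ZMod p))
    (hA : A = (Finset.Icc 1 ((p - 1) / 2 - i)).image (Nat.cast : ℕ → ZMod p))
    (hB : B = (Finset.Icc ((p + 1) / 2) (p - 1 - i)).image (Nat.cast : ℕ → ZMod p)) :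
    (stack p A * (stack p B)ᵀ).rank = 1 ∧
      ((p : ℤ) ^ 2 - (stack p A).rank - (stack p B).rank + 1 =
        2 * (i + 1) * ((p : ℤ) - 1)) := by
  have hp : Odd p := (Fact.out : p.Prime).odd_of_ne_two (by omega)
  obtain ⟨m, hm⟩ := id hp
  have hcardA : A.card = m - i := by
    rw [hA, card_image_natCast_Icc p (by omega)]
    omega
  have hcardB : B.card = m - i := by
    rw [hB, card_image_natCast_Icc p (by omega)]
    omega
  have hAne : A.Nonempty := Finset.card_pos.mp (by omega)
  have hBne : B.Nonempty := Finset.card_pos.mp (by omega)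
  have hAB : Disjoint A B := by
    rw [hA, hB]
    exact disjoint_image_natCast_Icc p (by omega) (by omega)
  have := hAne.coe_sort
  have := hBne.coe_sort
  refine ⟨?_, ?_⟩
  · rw [Stack.mul_transpose_of_disjoint hAB, rank_of_const_one]
  · rw [Stack.rank_eq hp hAne, Stack.rank_eq hp hBne, hcardA, hcardB]
    push_cast [Nat.cast_sub (by omega : i ≤ m), Nat.cast_sub (by omega : 1 ≤ p), hm]
    ring

/-- For an odd prime `p ≥ 5` and `0 ≤ i ≤ (p-5)/2`, the CSS construction
applied to `H₁` stacking layers `L_1, …, L_{(p-1)/2 - i}` and `H₂` stacking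
layers `L_{(p+1)/2}, …, L_{p-1-i}` yields an `[[p², 2(i+1)(p-1); 1]]`
entanglement-assisted code: `rank (H₁ H₂ᵀ) = 1` ebit and
`p² - rank H₁ - rank H₂ + 1 = 2(i+1)(p-1)` logical qubits. -/
theorem stmt_15 (p : ℕ) [Fact p.Prime] (hp5 : 5 ≤ p) (hodd : p ≠ 2)
    (i : ℕ) (hi : i ≤ (p - 5) / 2)
    (A B : Finset (ZMod p))
    (hA : A = (Finset.Icc 1 ((p - 1) / 2 - i)).image (Nat.cast : ℕ → ZMod p))
    (hB : B = (Finset.Icc ((p + 1) / 2) (p - 1 - i)).image (Nat.cast : ℕ → ZMod p)) :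
    (stack p A * (stack p B)ᵀ).rank = 1 ∧
      ((p : ℤ) ^ 2 - (stack p A).rank - (stack p B).rank + 1 =
        2 * (i + 1) * ((p : ℤ) - 1)) :=
  stmt_15_general p hp5 i hi A B hA hB
end
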